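/- arXiv:2006.08484 — 3 statements merged into one kernel-verified Lean document; each statement's English description precedes it below -/
import Mathlib

section
/- Let A ∈ ℝ^{m×n}, b ∈ ℝᵐ, c ∈ ℝⁿ, and consider the bilinear saddle function f(x,y) = cᵀx + yᵀAx + bᵀy on ℝⁿ × ℝᵐ admitting a saddle point (x*, y*). Let σ be the minimum nonzero singular value of A, let W* be the set of saddle points, and for w = (x,y) let r* = dist₂(w, W*). Then σ·(r*)² ≤ Δ_{r*}(w), where Δ_r(w) = sup_{‖(x',y') − w‖₂ ≤ r} [f(x, y') − f(x', y)]. -/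
/-!
Saddle points of `f(x, y) = cᵀx + yᵀAx + bᵀy` are the zeros of its gradient
`G(x, y) = (Aᵀy + c, Ax + b)`, and the gap `f(x, y') - f(x', y)` is the pairing of
`(x', y') - (x, y)` with `(-(Aᵀy + c), Ax + b)`. By Cauchy–Schwarz, the supremum of the gap over
the ball of radius `r` around `w` is exactly `r ‖G(w)‖`.

Hoffman-type bound `σ · dist(w, W*) ≤ ‖G(w)‖`: given a saddle point `w*`, keep only the components
of `x - x*` along eigenvectors of `AᵀA` with nonzero eigenvalue (and likewise for `y - y*` and
`AAᵀ`, whose nonzero eigenvalues are those of `AᵀA`). This does not change the image under `A`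
(resp. `Aᵀ`), which is a block of `G(w)`, and on these components `A` stretches by at least `σ`.
Subtracting them from `w` gives a saddle point within `‖G(w)‖ / σ` of `w`.
Hence `σ r*² ≤ r* ‖G(w)‖ = Δ_{r*}(w)`.
-/

open Matrix Finset

variable {ι κ : Type*} [Fintype ι] [Fintype κ]

def NonzeroEigenvaluesGE (S : Matrix ι ι ℝ) (s : ℝ) : Prop :=
  ∀ (μ : ℝ) (v : ι → ℝ), v ≠ 0 → S *ᵥ v = μ • v → μ ≠ 0 → s ≤ μ

lemma dotProduct_transpose_mul_self_mulVec (M : Matrix κ ι ℝ) (x : ι → ℝ) :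
    x ⬝ᵥ (Mᵀ * M) *ᵥ x = M *ᵥ x ⬝ᵥ M *ᵥ x := by
  rw [← mulVec_mulVec, dotProduct_mulVec, vecMul_transpose]

lemma transpose_mul_self_mulVec_eq_zero (M : Matrix κ ι ℝ) (x : ι → ℝ) :
    (Mᵀ * M) *ᵥ x = 0 ↔ M *ᵥ x = 0 := by
  simpa [conjTranspose_eq_transpose_of_trivial] using conjTranspose_mul_self_mulVec_eq_zero M x

lemma NonzeroEigenvaluesGE.mul_transpose {M : Matrix κ ι ℝ} {s : ℝ}
    (h : NonzeroEigenvaluesGE (Mᵀ * M) s) : NonzeroEigenvaluesGE (M * Mᵀ) s := by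
  intro μ v hv hMv hμ
  have hMtv : Mᵀ *ᵥ v ≠ 0 := fun h0 ↦ by
    rw [← mulVec_mulVec, h0, mulVec_zero, eq_comm, smul_eq_zero] at hMv
    exact hMv.elim hμ hv
  refine h μ _ hMtv ?_ hμ
  rw [mulVec_mulVec, Matrix.mul_assoc, ← mulVec_mulVec, hMv, mulVec_smul]

lemma eq_zero_of_forall_dotProduct_le {a : ι → ℝ} {C : ℝ} (h : ∀ y, a ⬝ᵥ y ≤ C) : a = 0 := by
  by_contra ha
  have hpos : 0 < a ⬝ᵥ a := dotProduct_self_star_pos_iff.2 ha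
  have := h (((|C| + 1) / (a ⬝ᵥ a)) • a)
  rw [dotProduct_smul, smul_eq_mul, div_mul_cancel₀ _ hpos.ne'] at this
  linarith [le_abs_self C]

lemma nonzeroEigenvaluesGE_sq_of_isLeast {M : Matrix κ ι ℝ} {σ : ℝ}
    (h : IsLeast {s : ℝ | 0 < s ∧ ∃ v : ι → ℝ, v ≠ 0 ∧ (Mᵀ * M).mulVec v = (s ^ 2) • v} σ) :
    NonzeroEigenvaluesGE (Mᵀ * M) (σ ^ 2) := by
  intro μ v hv hMv hμ
  have hμ₀ : 0 < μ := by
    have hvv : 0 < v ⬝ᵥ v := dotProduct_self_star_pos_iff.2 hv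
    have hMvv : 0 ≤ M *ᵥ v ⬝ᵥ M *ᵥ v := dotProduct_star_self_nonneg _
    rw [← dotProduct_transpose_mul_self_mulVec, hMv, dotProduct_smul, smul_eq_mul] at hMvv
    exact lt_of_le_of_ne (nonneg_of_mul_nonneg_left hMvv hvv) (Ne.symm hμ)
  have hσμ : σ ≤ √μ := h.2 ⟨Real.sqrt_pos.2 hμ₀, v, hv, by rwa [Real.sq_sqrt hμ₀.le]⟩
  calc σ ^ 2 ≤ √μ ^ 2 := pow_le_pow_left₀ h.1.1.le hσμ 2
    _ = μ := Real.sq_sqrt hμ₀.le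

lemma exists_mulVec_eq_mul_dotProduct_le (M : Matrix κ ι ℝ) {s : ℝ}
    (hs : NonzeroEigenvaluesGE (Mᵀ * M) s) (d : ι → ℝ) :
    ∃ z, M *ᵥ z = M *ᵥ d ∧ s * (z ⬝ᵥ z) ≤ M *ᵥ d ⬝ᵥ M *ᵥ d := by
  classical
  have hS : (Mᵀ * M).IsHermitian := by
    simpa [conjTranspose_eq_transpose_of_trivial] using isHermitian_conjTranspose_mul_self M
  let e := hS.eigenvectorBasis
  let μ := hS.eigenvalues
  have he : ∀ j, (Mᵀ * M) *ᵥ e j = μ j • e j := hS.mulVec_eigenvectorBasis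
  let a : ι → ℝ := fun j ↦ inner ℝ (e j) (WithLp.toLp 2 d)
  let t := univ.filter (μ · ≠ 0)
  let z : EuclideanSpace ℝ ι := ∑ j ∈ t, a j • e j
  have hd : d = ∑ j, a j • ⇑(e j) := by
    simpa using congrArg WithLp.ofLp (e.sum_repr' (WithLp.toLp 2 d)).symm
  have hker : M *ᵥ ∑ j ∈ univ.filter (¬μ · ≠ 0), a j • ⇑(e j) = 0 := by
    refine (mulVec_sum _ _ _).trans (sum_eq_zero fun j hj ↦ ?_)
    rw [mulVec_smul, (transpose_mul_self_mulVec_eq_zero _ _).1 (by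
      rw [he, not_not.1 (mem_filter.1 hj).2, zero_smul]), smul_zero]
  have hMz : M *ᵥ z = M *ᵥ d := by
    rw [hd, ← sum_filter_add_sum_filter_not univ (μ · ≠ 0), mulVec_add, hker, add_zero]
    simp only [z, t, WithLp.ofLp_sum, WithLp.ofLp_smul]
  have hdot : ∀ x y : EuclideanSpace ℝ ι, ⇑x ⬝ᵥ ⇑y = inner ℝ y x := fun x y ↦ by
    simp [EuclideanSpace.inner_eq_star_dotProduct]
  have hzz : z ⬝ᵥ z = ∑ j ∈ t, a j ^ 2 := by
    rw [hdot, e.orthonormal.inner_sum]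
    simp [sq]
  have hSz : (Mᵀ * M) *ᵥ z = ⇑(∑ j ∈ t, (μ j * a j) • e j) := by
    simp [z, mulVec_sum, mulVec_smul, he, smul_smul, mul_comm]
  have hMzz : M *ᵥ z ⬝ᵥ M *ᵥ z = ∑ j ∈ t, μ j * a j ^ 2 := by
    rw [← dotProduct_transpose_mul_self_mulVec, hSz, hdot, e.orthonormal.inner_sum]
    simp [sq, mul_assoc]
  refine ⟨z, hMz, ?_⟩
  rw [← hMz, hzz, hMzz, mul_sum]
  refine sum_le_sum fun j hj ↦ mul_le_mul_of_nonneg_right ?_ (sq_nonneg _)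
  exact hs _ _ (fun h ↦ e.orthonormal.ne_zero j (by ext i; exact congrFun h i))
    (he j) (mem_filter.1 hj).2

noncomputable def pairNorm (p : (ι → ℝ) × (κ → ℝ)) : ℝ := √(∑ i, p.1 i ^ 2 + ∑ j, p.2 j ^ 2)

lemma pairNorm_nonneg (p : (ι → ℝ) × (κ → ℝ)) : 0 ≤ pairNorm p := Real.sqrt_nonneg _

lemma pairNorm_eq_sqrt_dotProduct (p : (ι → ℝ) × (κ → ℝ)) :
    pairNorm p = √(p.1 ⬝ᵥ p.1 + p.2 ⬝ᵥ p.2) := by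
  simp [pairNorm, dotProduct, sq]

lemma sq_pairNorm (p : (ι → ℝ) × (κ → ℝ)) : pairNorm p ^ 2 = p.1 ⬝ᵥ p.1 + p.2 ⬝ᵥ p.2 := by
  rw [pairNorm_eq_sqrt_dotProduct, Real.sq_sqrt]
  exact add_nonneg (dotProduct_star_self_nonneg _) (dotProduct_star_self_nonneg _)

lemma pairNorm_smul (t : ℝ) (p : (ι → ℝ) × (κ → ℝ)) : pairNorm (t • p) = |t| * pairNorm p := by
  simp only [pairNorm, Prod.smul_fst, Prod.smul_snd, Pi.smul_apply, smul_eq_mul, mul_pow,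
    ← mul_sum, ← mul_add]
  rw [Real.sqrt_mul (sq_nonneg t), Real.sqrt_sq_eq_abs]

lemma dotProduct_add_dotProduct_le_pairNorm_mul (p q : (ι → ℝ) × (κ → ℝ)) :
    p.1 ⬝ᵥ q.1 + p.2 ⬝ᵥ q.2 ≤ pairNorm p * pairNorm q := by
  simpa [pairNorm, Fintype.sum_sum_type, dotProduct] using
    Real.sum_mul_le_sqrt_mul_sqrt univ (Sum.elim p.1 p.2) (Sum.elim q.1 q.2)

lemma exists_pairNorm_le_dotProduct_add_dotProduct_eq (q : (ι → ℝ) × (κ → ℝ)) {r : ℝ}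
    (hr : 0 ≤ r) : ∃ d, pairNorm d ≤ r ∧ d.1 ⬝ᵥ q.1 + d.2 ⬝ᵥ q.2 = r * pairNorm q := by
  rcases (pairNorm_nonneg q).eq_or_lt with hq | hq
  · exact ⟨0, by simpa [pairNorm] using hr, by simp [← hq]⟩
  refine ⟨(r / pairNorm q) • q, ?_, ?_⟩
  · rw [pairNorm_smul, abs_of_nonneg (by positivity), div_mul_cancel₀ _ hq.ne']
  · simp only [Prod.smul_fst, Prod.smul_snd, smul_dotProduct, smul_eq_mul, ← mul_add,
      ← sq_pairNorm]
    field_simp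

def saddleFun (A : Matrix κ ι ℝ) (b : κ → ℝ) (c : ι → ℝ) (x : ι → ℝ) (y : κ → ℝ) : ℝ :=
  c ⬝ᵥ x + y ⬝ᵥ A *ᵥ x + b ⬝ᵥ y

def saddleFunGrad (A : Matrix κ ι ℝ) (b : κ → ℝ) (c : ι → ℝ) (w : (ι → ℝ) × (κ → ℝ)) :
    (ι → ℝ) × (κ → ℝ) :=
  (Aᵀ *ᵥ w.2 + c, A *ᵥ w.1 + b)

section saddleFun

variable (A : Matrix κ ι ℝ) (b : κ → ℝ) (c : ι → ℝ)

lemma saddleFun_eq_left (x : ι → ℝ) (y : κ → ℝ) :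
    saddleFun A b c x y = c ⬝ᵥ x + (A *ᵥ x + b) ⬝ᵥ y := by
  rw [saddleFun, add_dotProduct, dotProduct_comm y, dotProduct_comm b, add_assoc]

lemma saddleFun_eq_right (x : ι → ℝ) (y : κ → ℝ) :
    saddleFun A b c x y = (Aᵀ *ᵥ y + c) ⬝ᵥ x + b ⬝ᵥ y := by
  rw [saddleFun, add_dotProduct, dotProduct_mulVec, ← mulVec_transpose, dotProduct_comm c]
  ring

lemma saddleFun_sub_saddleFun (x x' : ι → ℝ) (y y' : κ → ℝ) :
    saddleFun A b c x y' - saddleFun A b c x' y =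
      (x - x') ⬝ᵥ (Aᵀ *ᵥ y + c) + (y' - y) ⬝ᵥ (A *ᵥ x + b) := by
  have hy : saddleFun A b c x y' - saddleFun A b c x y = (y' - y) ⬝ᵥ (A *ᵥ x + b) := by
    rw [saddleFun_eq_left, saddleFun_eq_left, sub_dotProduct, dotProduct_comm y',
      dotProduct_comm y]
    ring
  have hx : saddleFun A b c x y - saddleFun A b c x' y = (x - x') ⬝ᵥ (Aᵀ *ᵥ y + c) := by
    rw [saddleFun_eq_right, saddleFun_eq_right, sub_dotProduct, dotProduct_comm x,
      dotProduct_comm x']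
    ring
  linarith

lemma isSaddlePoint_saddleFun_iff (x₀ : ι → ℝ) (y₀ : κ → ℝ) :
    (∀ x y, saddleFun A b c x₀ y ≤ saddleFun A b c x₀ y₀ ∧
      saddleFun A b c x₀ y₀ ≤ saddleFun A b c x y₀) ↔
      A *ᵥ x₀ + b = 0 ∧ Aᵀ *ᵥ y₀ + c = 0 := by
  constructor
  · intro h
    have hy : ∀ y, (A *ᵥ x₀ + b) ⬝ᵥ y ≤ (A *ᵥ x₀ + b) ⬝ᵥ y₀ := fun y ↦ by
      simpa only [saddleFun_eq_left, add_le_add_iff_left] using (h 0 y).1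
    have hx : ∀ x, (Aᵀ *ᵥ y₀ + c) ⬝ᵥ x ≤ b ⬝ᵥ y₀ - saddleFun A b c x₀ y₀ := fun x ↦ by
      have := (h (-x) y₀).2
      rw [saddleFun_eq_right A b c (-x), dotProduct_neg] at this
      linarith
    exact ⟨eq_zero_of_forall_dotProduct_le hy, eq_zero_of_forall_dotProduct_le hx⟩
  · rintro ⟨hx, hy⟩ x y
    have hx' : ∀ y, saddleFun A b c x₀ y = c ⬝ᵥ x₀ := by simp [saddleFun_eq_left, hx]
    have hy' : ∀ x, saddleFun A b c x y₀ = b ⬝ᵥ y₀ := by simp [saddleFun_eq_right, hy]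
    exact ⟨(hx' y).trans (hx' y₀).symm |>.le, (hy' x₀).trans (hy' x).symm |>.le⟩

lemma saddleFunGrad_eq_zero_iff (p : (ι → ℝ) × (κ → ℝ)) :
    saddleFunGrad A b c p = 0 ↔ A *ᵥ p.1 + b = 0 ∧ Aᵀ *ᵥ p.2 + c = 0 := by
  rw [saddleFunGrad, Prod.mk_eq_zero, and_comm]

lemma isLUB_saddleFun_sub_saddleFun (w : (ι → ℝ) × (κ → ℝ)) {r : ℝ} (hr : 0 ≤ r) :
    IsLUB {g | ∃ p, pairNorm (p - w) ≤ r ∧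
      g = saddleFun A b c w.1 p.2 - saddleFun A b c p.1 w.2}
      (r * pairNorm (saddleFunGrad A b c w)) := by
  set q : (ι → ℝ) × (κ → ℝ) := (-(saddleFunGrad A b c w).1, (saddleFunGrad A b c w).2)
  have hq : pairNorm q = pairNorm (saddleFunGrad A b c w) := by simp [q, pairNorm]
  have hgap : ∀ p, saddleFun A b c w.1 p.2 - saddleFun A b c p.1 w.2 =
      (p - w).1 ⬝ᵥ q.1 + (p - w).2 ⬝ᵥ q.2 := fun p ↦ by
    rw [saddleFun_sub_saddleFun, ← neg_sub p.1, neg_dotProduct, ← dotProduct_neg]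
    rfl
  rw [← hq]
  refine ⟨?_, fun g hg ↦ ?_⟩
  · rintro _ ⟨p, hp, rfl⟩
    rw [hgap]
    exact (dotProduct_add_dotProduct_le_pairNorm_mul _ _).trans
      (mul_le_mul_of_nonneg_right hp (pairNorm_nonneg _))
  · obtain ⟨d, hd, hdq⟩ := exists_pairNorm_le_dotProduct_add_dotProduct_eq q hr
    exact hg ⟨w + d, by simpa using hd, by rw [hgap, add_sub_cancel_left, hdq]⟩

lemma exists_saddleFunGrad_eq_zero_mul_pairNorm_sub_le {σ : ℝ} (hσ : 0 ≤ σ)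
    (hA : NonzeroEigenvaluesGE (Aᵀ * A) (σ ^ 2)) {p₀ : (ι → ℝ) × (κ → ℝ)}
    (hp₀ : saddleFunGrad A b c p₀ = 0) (w : (ι → ℝ) × (κ → ℝ)) :
    ∃ p, saddleFunGrad A b c p = 0 ∧ σ * pairNorm (w - p) ≤ pairNorm (saddleFunGrad A b c w) := by
  simp only [saddleFunGrad_eq_zero_iff, add_eq_zero_iff_eq_neg] at hp₀
  obtain ⟨z₁, hz₁, hz₁'⟩ := exists_mulVec_eq_mul_dotProduct_le A hA (w.1 - p₀.1)
  obtain ⟨z₂, hz₂, hz₂'⟩ := exists_mulVec_eq_mul_dotProduct_le Aᵀ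
    (by simpa only [transpose_transpose] using hA.mul_transpose) (w.2 - p₀.2)
  rw [mulVec_sub, hp₀.1, sub_neg_eq_add] at hz₁ hz₁'
  rw [mulVec_sub, hp₀.2, sub_neg_eq_add] at hz₂ hz₂'
  refine ⟨(w.1 - z₁, w.2 - z₂), ?_, ?_⟩
  · simp [saddleFunGrad, mulVec_sub, hz₁, hz₂]
  · rw [pairNorm_eq_sqrt_dotProduct, pairNorm_eq_sqrt_dotProduct, ← Real.sqrt_sq hσ,
      ← Real.sqrt_mul (sq_nonneg σ)]
    gcongr
    simp only [Prod.fst_sub, Prod.snd_sub, sub_sub_cancel, saddleFunGrad]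
    linarith

end saddleFun

/-- Error bound for bilinear saddle functions in terms of the minimum
nonzero singular value of the coupling matrix. -/
theorem stmt2 (n m : ℕ) (A : Matrix (Fin m) (Fin n) ℝ) (b : Fin m → ℝ) (c : Fin n → ℝ)
    (f : (Fin n → ℝ) → (Fin m → ℝ) → ℝ)
    (hf : ∀ x y, f x y = c ⬝ᵥ x + y ⬝ᵥ A.mulVec x + b ⬝ᵥ y)
    (xs : Fin n → ℝ) (ys : Fin m → ℝ)
    (hsaddle : ∀ x y, f xs y ≤ f xs ys ∧ f xs ys ≤ f x ys)
    (σ : ℝ)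
    (hσ : IsLeast {s : ℝ | 0 < s ∧ ∃ v : Fin n → ℝ, v ≠ 0 ∧
      (Aᵀ * A).mulVec v = (s ^ 2) • v} σ)
    (Wstar : Set ((Fin n → ℝ) × (Fin m → ℝ)))
    (hW : Wstar = {p | ∀ x y, f p.1 y ≤ f p.1 p.2 ∧ f p.1 p.2 ≤ f x p.2})
    (enorm : ((Fin n → ℝ) × (Fin m → ℝ)) → ℝ)
    (hen : ∀ p, enorm p = Real.sqrt (∑ i, p.1 i ^ 2 + ∑ j, p.2 j ^ 2))
    (w : (Fin n → ℝ) × (Fin m → ℝ)) (rstar : ℝ)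
    (hr : rstar = sInf {d : ℝ | ∃ p ∈ Wstar, d = enorm (w - p)})
    (Δ : ℝ) (hΔ : Δ = sSup {g : ℝ | ∃ p : (Fin n → ℝ) × (Fin m → ℝ),
      enorm (p - w) ≤ rstar ∧ g = f w.1 p.2 - f p.1 w.2}) :
    σ * rstar ^ 2 ≤ Δ := by
  obtain rfl : f = saddleFun A b c := funext₂ hf
  obtain rfl : enorm = pairNorm := funext hen
  have hW' : ∀ p, p ∈ Wstar ↔ saddleFunGrad A b c p = 0 := fun p ↦ by
    rw [hW, saddleFunGrad_eq_zero_iff]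
    exact isSaddlePoint_saddleFun_iff A b c p.1 p.2
  set N := pairNorm (saddleFunGrad A b c w)
  obtain ⟨p, hpW, hp⟩ : ∃ p, saddleFunGrad A b c p = 0 ∧ σ * pairNorm (w - p) ≤ N :=
    exists_saddleFunGrad_eq_zero_mul_pairNorm_sub_le A b c hσ.1.1.le
      (nonzeroEigenvaluesGE_sq_of_isLeast hσ) ((hW' (xs, ys)).1 (hW ▸ hsaddle)) w
  have hD₀ : ∀ d ∈ {d | ∃ p ∈ Wstar, d = pairNorm (w - p)}, 0 ≤ d := by
    rintro _ ⟨p, -, rfl⟩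
    exact pairNorm_nonneg _
  have hr₀ : 0 ≤ rstar := hr ▸ Real.sInf_nonneg hD₀
  have hσr : σ * rstar ≤ N := by
    have hrp : rstar ≤ pairNorm (w - p) := hr ▸ csInf_le ⟨0, hD₀⟩ ⟨p, (hW' p).2 hpW, rfl⟩
    exact (mul_le_mul_of_nonneg_left hrp hσ.1.1.le).trans hp
  have hΔ' : Δ = rstar * N := hΔ ▸ (isLUB_saddleFun_sub_saddleFun A b c w hr₀).csSup_eq
    ⟨_, w, by simpa [pairNorm] using hr₀, rfl⟩
  calc σ * rstar ^ 2 = (σ * rstar) * rstar := by ring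
    _ ≤ N * rstar := mul_le_mul_of_nonneg_right hσr hr₀
    _ = Δ := by rw [hΔ', mul_comm]
end

section
/- Consider the bilinear function f(x,y) = yᵀΣx on ℝⁿ × ℝᵐ where Σ is a (possibly nonsquare) diagonal matrix with minimum nonzero diagonal entry (in absolute value) σ > 0. Let D be the diagonal matrix with D_ii = 1 if Σ_ii ≠ 0 and 0 otherwise. Then the set of saddle points is W* = {x : Σx = 0} × {y : yᵀΣ = 0}, and for any w = (x,y), dist₂(w, W*)² = ‖Dx‖₂² + ‖Dᵀy‖₂², and sup_{‖u‖₂ ≤ r} [f(x, u_y) − f(u_x, y)] over perturbations u = (u_x − x, u_y − y) centered at w equals r·‖(Σx, Σᵀy)‖₂ ≥ σ·r·‖(Dx, Dᵀy)‖₂. -/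
/-!
Testing the saddle inequalities against `y₀ + Σx₀` and `x₀ - Σᵀy₀` forces `Σx₀ = 0` and
`Σᵀy₀ = 0`, and conversely the bilinear form vanishes identically in each argument there.
For a diagonal `Σ` these kernels are coordinate subspaces (the coordinates in the support of `Σ`
vanish), so the distance from `w` to `W*` is the norm of the support coordinates of `w`, which is
`‖(Dx, Dᵀy)‖`. The localized gap is the linear functional `u ↦ ⟪(-Σᵀy, Σx), u - w⟫`, whose maximum
over the ball of radius `r` is `r ‖(Σx, Σᵀy)‖` by Cauchy–Schwarz. Finally
`σ ‖(Dx, Dᵀy)‖ ≤ ‖(Σx, Σᵀy)‖` holds entry by entry, since `σ ≤ |Σᵢᵢ|` on the support.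
-/

open Matrix

section Saddle

variable {ι κ R : Type*} [Fintype ι] [Fintype κ] [CommRing R] [LinearOrder R]
  [IsStrictOrderedRing R]

theorem Matrix.eq_zero_of_dotProduct_self_nonpos {v : ι → R} (h : v ⬝ᵥ v ≤ 0) : v = 0 :=
  dotProduct_self_eq_zero.1 (h.antisymm (Finset.sum_nonneg fun i _ => mul_self_nonneg (v i)))

theorem setOf_saddlePoint_dotProduct_mulVec (S : Matrix ι κ R) :
    {p : (κ → R) × (ι → R) | ∀ x y,
      y ⬝ᵥ S *ᵥ p.1 ≤ p.2 ⬝ᵥ S *ᵥ p.1 ∧ p.2 ⬝ᵥ S *ᵥ p.1 ≤ p.2 ⬝ᵥ S *ᵥ x} =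
      {x | S *ᵥ x = 0} ×ˢ {y | Sᵀ *ᵥ y = 0} := by
  ext ⟨x₀, y₀⟩
  simp only [Set.mem_ofPred_eq, Set.mem_prod]
  constructor
  · intro h
    have hx := (h x₀ (y₀ + S *ᵥ x₀)).1
    have hy := (h (x₀ - Sᵀ *ᵥ y₀) y₀).2
    have hSST : y₀ ⬝ᵥ S *ᵥ (Sᵀ *ᵥ y₀) = Sᵀ *ᵥ y₀ ⬝ᵥ Sᵀ *ᵥ y₀ := by
      rw [dotProduct_mulVec, ← mulVec_transpose]
    rw [add_dotProduct] at hx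
    rw [mulVec_sub, dotProduct_sub, hSST] at hy
    exact ⟨eq_zero_of_dotProduct_self_nonpos (by linarith),
      eq_zero_of_dotProduct_self_nonpos (by linarith)⟩
  · rintro ⟨hx, hy⟩ x y
    simp [hx, dotProduct_mulVec y₀, ← mulVec_transpose, hy]

end Saddle

section Gap

variable {ι κ : Type*} [Fintype ι] [Fintype κ]

theorem dotProduct_add_dotProduct_le_sqrt_mul_sqrt (a u : ι → ℝ) (b v : κ → ℝ) :
    a ⬝ᵥ u + b ⬝ᵥ v ≤
      √(∑ i, a i ^ 2 + ∑ j, b j ^ 2) * √(∑ i, u i ^ 2 + ∑ j, v j ^ 2) := by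
  simpa [dotProduct, Fintype.sum_sum_type] using
    Real.sum_mul_le_sqrt_mul_sqrt Finset.univ (Sum.elim a b) (Sum.elim u v)

theorem isGreatest_dotProduct_add_dotProduct_ball (a : ι → ℝ) (b : κ → ℝ)
    (w : (ι → ℝ) × (κ → ℝ)) {r : ℝ} (hr : 0 ≤ r) :
    IsGreatest {t | ∃ p : (ι → ℝ) × (κ → ℝ),
        √(∑ i, (p - w).1 i ^ 2 + ∑ j, (p - w).2 j ^ 2) ≤ r ∧
          t = a ⬝ᵥ (p.1 - w.1) + b ⬝ᵥ (p.2 - w.2)}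
      (r * √(∑ i, a i ^ 2 + ∑ j, b j ^ 2)) := by
  set M := √(∑ i, a i ^ 2 + ∑ j, b j ^ 2)
  have hM : M ^ 2 = ∑ i, a i ^ 2 + ∑ j, b j ^ 2 := Real.sq_sqrt (by positivity)
  constructor
  · set c := r / M
    have hc : 0 ≤ c := div_nonneg hr (Real.sqrt_nonneg _)
    have hcM : c * M ≤ r := by
      rcases eq_or_ne M 0 with h | h
      · simpa [h] using hr
      · exact (div_mul_cancel₀ r h).le
    have hcM2 : c * M ^ 2 = r * M := by
      rcases eq_or_ne M 0 with h | h
      · simp [h]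
      · rw [sq, ← mul_assoc, div_mul_cancel₀ r h]
    refine ⟨(w.1 + c • a, w.2 + c • b), ?_, ?_⟩
    · have hsq : ∑ i, (c • a) i ^ 2 + ∑ j, (c • b) j ^ 2 = (c * M) ^ 2 := by
        simp only [Pi.smul_apply, smul_eq_mul, mul_pow, ← Finset.mul_sum, hM, mul_add]
      simp only [Prod.fst_sub, Prod.snd_sub, add_sub_cancel_left, hsq]
      rwa [Real.sqrt_sq (mul_nonneg hc (Real.sqrt_nonneg _))]
    · rw [← hcM2, hM]
      simp only [add_sub_cancel_left, dotProduct, Pi.smul_apply, smul_eq_mul, Finset.mul_sum,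
        sq, mul_add, mul_left_comm c]
  · rintro t ⟨p, hp, rfl⟩
    calc a ⬝ᵥ (p.1 - w.1) + b ⬝ᵥ (p.2 - w.2)
        ≤ M * √(∑ i, (p - w).1 i ^ 2 + ∑ j, (p - w).2 j ^ 2) :=
          dotProduct_add_dotProduct_le_sqrt_mul_sqrt _ _ _ _
      _ ≤ M * r := by gcongr
      _ = r * M := mul_comm _ _

theorem dotProduct_mulVec_sub_dotProduct_mulVec {R : Type*} [CommRing R] (S : Matrix ι κ R)
    (w p : (κ → R) × (ι → R)) :
    p.2 ⬝ᵥ S *ᵥ w.1 - w.2 ⬝ᵥ S *ᵥ p.1 =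
      -(Sᵀ *ᵥ w.2) ⬝ᵥ (p.1 - w.1) + S *ᵥ w.1 ⬝ᵥ (p.2 - w.2) := by
  simp only [mulVec_transpose, neg_dotProduct, dotProduct_sub, ← dotProduct_mulVec,
    dotProduct_comm _ (S *ᵥ w.1)]
  ring

end Gap

def Matrix.IsRectDiag {R : Type*} [Zero R] {m n : ℕ} (A : Matrix (Fin m) (Fin n) R) : Prop :=
  ∀ (i : Fin m) (j : Fin n), (i : ℕ) ≠ (j : ℕ) → A i j = 0

namespace Matrix.IsRectDiag

variable {R : Type*} {m n : ℕ}

section Zero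

variable [Zero R] {A : Matrix (Fin m) (Fin n) R}

theorem transpose (hA : A.IsRectDiag) : Aᵀ.IsRectDiag :=
  fun j i h => hA i j (Ne.symm h)

theorem mono {B : Matrix (Fin m) (Fin n) R} (hA : A.IsRectDiag)
    (h : ∀ i j, A i j = 0 → B i j = 0) : B.IsRectDiag :=
  fun i j hij => h i j (hA i j hij)

theorem apply_eq_zero_of_ne (hA : A.IsRectDiag) {i : Fin m} {j j' : Fin n} (h : A i j ≠ 0)
    (hj : j' ≠ j) : A i j' = 0 :=
  hA i j' fun h' => hj (Fin.ext (h'.symm.trans (not_imp_comm.1 (hA i j) h)))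

end Zero

theorem mulVec_apply_of_ne_zero [NonUnitalNonAssocSemiring R] {A : Matrix (Fin m) (Fin n) R}
    (hA : A.IsRectDiag) {i : Fin m} {j : Fin n} (h : A i j ≠ 0) (x : Fin n → R) :
    (A *ᵥ x) i = A i j * x j :=
  Finset.sum_eq_single j
    (fun j' _ hj' => by simp [hA.apply_eq_zero_of_ne h hj'])
    (fun hj => absurd (Finset.mem_univ j) hj)

theorem mulVec_eq_zero_iff [NonUnitalNonAssocSemiring R] [NoZeroDivisors R]
    {A : Matrix (Fin m) (Fin n) R} (hA : A.IsRectDiag) {x : Fin n → R} :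
    A *ᵥ x = 0 ↔ ∀ i j, A i j ≠ 0 → x j = 0 := by
  constructor
  · intro h i j hij
    have hi := congrFun h i
    rw [hA.mulVec_apply_of_ne_zero hij, Pi.zero_apply] at hi
    exact (mul_eq_zero.1 hi).resolve_left hij
  · intro h
    funext i
    simp only [mulVec, dotProduct, Pi.zero_apply]
    refine Finset.sum_eq_zero fun j _ => ?_
    by_cases hij : A i j = 0
    · rw [hij, zero_mul]
    · rw [h i j hij, mul_zero]

section CommSemiring

variable [CommSemiring R] {A : Matrix (Fin m) (Fin n) R}

theorem sq_mulVec_apply (hA : A.IsRectDiag) (x : Fin n → R) (i : Fin m) :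
    (A *ᵥ x) i ^ 2 = ∑ j, A i j ^ 2 * x j ^ 2 := by
  by_cases h : ∃ j, A i j ≠ 0
  · obtain ⟨j, hj⟩ := h
    rw [hA.mulVec_apply_of_ne_zero hj, Finset.sum_eq_single j, mul_pow]
    · intro j' _ hj'
      simp [hA.apply_eq_zero_of_ne hj hj']
    · simp
  · push Not at h
    simp [mulVec, dotProduct, h]

theorem sum_sq_mulVec_add_sum_sq_transpose_mulVec (hA : A.IsRectDiag) (x : Fin n → R)
    (y : Fin m → R) :
    ∑ i, (A *ᵥ x) i ^ 2 + ∑ j, (Aᵀ *ᵥ y) j ^ 2 = ∑ i, ∑ j, A i j ^ 2 * (x j ^ 2 + y i ^ 2) := by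
  simp only [hA.sq_mulVec_apply, hA.transpose.sq_mulVec_apply, transpose_apply, mul_add,
    Finset.sum_add_distrib]
  rw [Finset.sum_comm (γ := Fin n)]

end CommSemiring

theorem mul_sqrt_sum_sq_mulVec_le {A B : Matrix (Fin m) (Fin n) ℝ} (hA : A.IsRectDiag)
    (hB : B.IsRectDiag) {c : ℝ} (hc : 0 ≤ c) (hle : ∀ i j, c * |B i j| ≤ |A i j|)
    (x : Fin n → ℝ) (y : Fin m → ℝ) :
    c * √(∑ i, (B *ᵥ x) i ^ 2 + ∑ j, (Bᵀ *ᵥ y) j ^ 2) ≤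
      √(∑ i, (A *ᵥ x) i ^ 2 + ∑ j, (Aᵀ *ᵥ y) j ^ 2) := by
  rw [hA.sum_sq_mulVec_add_sum_sq_transpose_mulVec, hB.sum_sq_mulVec_add_sum_sq_transpose_mulVec,
    ← Real.sqrt_sq hc, ← Real.sqrt_mul (sq_nonneg c), Finset.mul_sum]
  refine Real.sqrt_le_sqrt (Finset.sum_le_sum fun i _ => ?_)
  rw [Finset.mul_sum]
  refine Finset.sum_le_sum fun j _ => ?_
  have hcB : c ^ 2 * B i j ^ 2 ≤ A i j ^ 2 := by
    rw [← sq_abs (B i j), ← sq_abs (A i j), ← mul_pow]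
    exact pow_le_pow_left₀ (by positivity) (hle i j) 2
  rw [← mul_assoc]
  exact mul_le_mul_of_nonneg_right hcB (by positivity)

theorem sum_sq_mulVec_of_support {A B : Matrix (Fin m) (Fin n) ℝ} (hA : A.IsRectDiag)
    (hB : ∀ i j, B i j = if A i j ≠ 0 then 1 else 0) (x : Fin n → ℝ) :
    ∑ i, (B *ᵥ x) i ^ 2 = ∑ j, if ∃ i, A i j ≠ 0 then x j ^ 2 else 0 := by
  have hBdiag : B.IsRectDiag := hA.mono fun i j h => by simp [hB, h]
  simp only [hBdiag.sq_mulVec_apply]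
  rw [Finset.sum_comm]
  refine Finset.sum_congr rfl fun j _ => ?_
  split_ifs with h
  · obtain ⟨i₀, hi₀⟩ := h
    rw [Finset.sum_eq_single i₀]
    · simp [hB, hi₀]
    · intro i _ hi
      have hAij : A i j = 0 := hA.transpose.apply_eq_zero_of_ne hi₀ hi
      simp [hB, hAij]
    · simp
  · push Not at h
    simp [hB, h]

theorem isLeast_sqrt_sum_sq_sub_ker {A : Matrix (Fin m) (Fin n) ℝ} (hA : A.IsRectDiag)
    (w : (Fin n → ℝ) × (Fin m → ℝ)) :
    IsLeast {d | ∃ p ∈ {x | A *ᵥ x = 0} ×ˢ {y | Aᵀ *ᵥ y = 0},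
        d = √(∑ j, (w - p).1 j ^ 2 + ∑ i, (w - p).2 i ^ 2)}
      (√((∑ j, if ∃ i, A i j ≠ 0 then w.1 j ^ 2 else 0) +
        ∑ i, if ∃ j, A i j ≠ 0 then w.2 i ^ 2 else 0)) := by
  constructor
  · refine ⟨(fun j => if ∃ i, A i j ≠ 0 then 0 else w.1 j,
      fun i => if ∃ j, A i j ≠ 0 then 0 else w.2 i), ⟨?_, ?_⟩, ?_⟩
    · exact hA.mulVec_eq_zero_iff.2 fun i j h => if_pos ⟨i, h⟩
    · exact hA.transpose.mulVec_eq_zero_iff.2 fun j i h => if_pos ⟨j, h⟩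
    · congr 2 <;> refine Finset.sum_congr rfl fun k _ => ?_ <;>
        simp only [Prod.fst_sub, Prod.snd_sub, Pi.sub_apply] <;> split_ifs <;> simp
  · rintro d ⟨p, ⟨hp₁, hp₂⟩, rfl⟩
    gcongr with j _ i _
    · split_ifs with h
      · obtain ⟨i, hi⟩ := h
        simp [hA.mulVec_eq_zero_iff.1 hp₁ i j hi]
      · positivity
    · split_ifs with h
      · obtain ⟨j, hj⟩ := h
        simp [hA.transpose.mulVec_eq_zero_iff.1 hp₂ j i hj]
      · positivity

end Matrix.IsRectDiag

/-- The diagonal bilinear case: saddle points, distance to optimality, and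
the value of the localized gap. -/
theorem stmt3 (n m : ℕ) (S : Matrix (Fin m) (Fin n) ℝ)
    (hdiag : ∀ (i : Fin m) (j : Fin n), (i : ℕ) ≠ (j : ℕ) → S i j = 0)
    (σ : ℝ) (hσpos : 0 < σ)
    (hσ : IsLeast {a : ℝ | ∃ (i : Fin m) (j : Fin n),
      (i : ℕ) = (j : ℕ) ∧ S i j ≠ 0 ∧ a = |S i j|} σ)
    (D : Matrix (Fin m) (Fin n) ℝ)
    (hD : ∀ (i : Fin m) (j : Fin n),
      D i j = if (i : ℕ) = (j : ℕ) ∧ S i j ≠ 0 then 1 else 0)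
    (f : (Fin n → ℝ) → (Fin m → ℝ) → ℝ)
    (hf : ∀ x y, f x y = y ⬝ᵥ S.mulVec x)
    (Wstar : Set ((Fin n → ℝ) × (Fin m → ℝ)))
    (hW : Wstar = {p | ∀ x y, f p.1 y ≤ f p.1 p.2 ∧ f p.1 p.2 ≤ f x p.2})
    (enorm : ((Fin n → ℝ) × (Fin m → ℝ)) → ℝ)
    (hen : ∀ p, enorm p = Real.sqrt (∑ i, p.1 i ^ 2 + ∑ j, p.2 j ^ 2))
    (w : (Fin n → ℝ) × (Fin m → ℝ)) (r : ℝ) (hr : 0 ≤ r) :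
    Wstar = {x | S.mulVec x = 0} ×ˢ {y | Sᵀ.mulVec y = 0} ∧
    (sInf {d : ℝ | ∃ p ∈ Wstar, d = enorm (w - p)}) ^ 2 =
      ∑ i, (D.mulVec w.1) i ^ 2 + ∑ j, (Dᵀ.mulVec w.2) j ^ 2 ∧
    sSup {g : ℝ | ∃ p : (Fin n → ℝ) × (Fin m → ℝ),
        enorm (p - w) ≤ r ∧ g = f w.1 p.2 - f p.1 w.2} =
      r * Real.sqrt (∑ i, (S.mulVec w.1) i ^ 2 + ∑ j, (Sᵀ.mulVec w.2) j ^ 2) ∧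
    σ * r * Real.sqrt (∑ i, (D.mulVec w.1) i ^ 2 + ∑ j, (Dᵀ.mulVec w.2) j ^ 2) ≤
      r * Real.sqrt (∑ i, (S.mulVec w.1) i ^ 2 + ∑ j, (Sᵀ.mulVec w.2) j ^ 2) := by
  have hS : S.IsRectDiag := hdiag
  have hDS : ∀ i j, D i j = if S i j ≠ 0 then 1 else 0 := fun i j => by
    by_cases h : (i : ℕ) = j
    · simp [hD, h]
    · simp [hD, h, hdiag i j h]
  have hW' : Wstar = {x | S *ᵥ x = 0} ×ˢ {y | Sᵀ *ᵥ y = 0} := by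
    simpa only [hf, setOf_saddlePoint_dotProduct_mulVec] using hW
  refine ⟨hW', ?_, ?_, ?_⟩
  · simp only [hW', hen]
    rw [hS.sum_sq_mulVec_of_support hDS,
      hS.transpose.sum_sq_mulVec_of_support (B := Dᵀ) fun j i => hDS i j,
      (hS.isLeast_sqrt_sum_sq_sub_ker w).csInf_eq, Real.sq_sqrt]
    · rfl
    · exact add_nonneg (Finset.sum_nonneg fun j _ => by split_ifs <;> positivity)
        (Finset.sum_nonneg fun i _ => by split_ifs <;> positivity)
  · simp only [hen, hf, dotProduct_mulVec_sub_dotProduct_mulVec]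
    rw [(isGreatest_dotProduct_add_dotProduct_ball _ _ w hr).csSup_eq]
    simp [add_comm]
  · have hσD : ∀ i j, σ * |D i j| ≤ |S i j| := fun i j => by
      by_cases h : S i j = 0
      · simp [hDS, h]
      · simpa [hDS, h] using hσ.2 ⟨i, j, not_imp_comm.1 (hdiag i j) h, h, rfl⟩
    rw [mul_comm σ r, mul_assoc]
    exact mul_le_mul_of_nonneg_left
      (hS.mul_sqrt_sum_sq_mulVec_le (hS.mono fun i j h => by simp [hDS, h]) hσpos.le hσD _ _) hr
end

section
/- Let t* ≥ 2 and let φ be a strictly increasing function. Suppose a sequence (τ_i) of positive reals satisfies, for every i ≥ 2: φ(τ_i − 1) < max{ φ(t* − 2), √(φ(t* − 2)·φ(τ_{i−1})) }, and assume φ is log-concave so that √(φ(a)φ(b)) ≤ φ((a+b)/2). Then τ_i ≤ max{τ_1, t*} for all i, and ∑_{j=1}^∞ (τ_j − t*)⁺ ≤ 2(τ_1 − t*)⁺. -/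
/-!
Monotonicity of `φ` and log-concavity turn the recursion into the explicit bound
`τ (i + 1) < max (t* - 1) ((t* + τ i) / 2)`: an epoch longer than `t*` is followed by one at most
halfway between it and `t*`. Hence `τ` never exceeds `max (τ 1) t*`, and the excesses
`(τ i - t*)⁺` at least halve at each step, so their sum is dominated by a geometric series
of total `2 (τ 1 - t*)⁺`.
-/

open Finset

lemma lt_max_sub_one_midpoint_of_logConcave {φ : ℝ → ℝ} (hφ : StrictMono φ)
    (hlc : ∀ a b : ℝ, √(φ a * φ b) ≤ φ ((a + b) / 2)) {t x y : ℝ}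
    (h : φ (y - 1) < max (φ (t - 2)) √(φ (t - 2) * φ x)) :
    y < max (t - 1) ((t + x) / 2) := by
  have hφy : φ (y - 1) < φ (max (t - 2) ((t - 2 + x) / 2)) := by
    rw [hφ.monotone.map_max]
    exact h.trans_le (max_le_max le_rfl (hlc _ _))
  have hy := hφ.lt_iff_lt.mp hφy
  rcases le_total (t - 2) ((t - 2 + x) / 2) with hc | hc
  · rw [max_eq_right hc] at hy
    exact lt_max_of_lt_right (by linarith)
  · rw [max_eq_left hc] at hy
    exact lt_max_of_lt_left (by linarith)

lemma le_max_of_lt_max_midpoint {t x y : ℝ} (h : y < max (t - 1) ((t + x) / 2)) :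
    y ≤ max x t := by
  rcases max_cases (t - 1) ((t + x) / 2) with ⟨he, _⟩ | ⟨he, _⟩ <;> rw [he] at h
  · exact le_max_of_le_right (by linarith)
  · rcases le_total x t with hxt | hxt
    · exact le_max_of_le_right (by linarith)
    · exact le_max_of_le_left (by linarith)

lemma max_sub_zero_le_half_of_lt_max_midpoint {t x y : ℝ}
    (h : y < max (t - 1) ((t + x) / 2)) :
    max (y - t) 0 ≤ max (x - t) 0 / 2 := by
  have hx : x - t ≤ max (x - t) 0 := le_max_left _ _
  have hx0 : 0 ≤ max (x - t) 0 := le_max_right _ _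
  refine max_le ?_ (by linarith)
  rcases max_cases (t - 1) ((t + x) / 2) with ⟨he, _⟩ | ⟨he, _⟩ <;> rw [he] at h <;> linarith

lemma le_max_head_of_succ_le_max {a : ℕ → ℝ} {t : ℝ}
    (h : ∀ i ≥ 1, a (i + 1) ≤ max (a i) t) : ∀ i ≥ 1, a i ≤ max (a 1) t := by
  intro i hi
  induction i, hi using Nat.le_induction with
  | base => exact le_max_left _ _
  | succ n hn ih => exact (h n hn).trans (max_le ih (le_max_right _ _))

lemma sum_Icc_le_two_mul_of_halving {u : ℕ → ℝ} (hu0 : ∀ i, 0 ≤ u i)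
    (hu : ∀ i ≥ 1, u (i + 1) ≤ u i / 2) (n : ℕ) :
    ∑ j ∈ Icc 1 n, u j ≤ 2 * u 1 := by
  have hinv : ∀ m ≥ 1, ∑ j ∈ Icc 1 m, u j + u m ≤ 2 * u 1 := by
    intro m hm
    induction m, hm using Nat.le_induction with
    | base => simp only [Icc_self, sum_singleton]; linarith
    | succ m hm ih =>
      rw [sum_Icc_succ_top (by omega)]
      linarith [hu m hm]
  rcases Nat.eq_zero_or_pos n with rfl | hn
  · simpa using hu0 1
  · linarith [hinv n hn, hu0 n]

theorem stmt6_general (tstar : ℝ)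
    (φ : ℝ → ℝ) (hφmono : StrictMono φ)
    (hφlc : ∀ a b : ℝ, Real.sqrt (φ a * φ b) ≤ φ ((a + b) / 2))
    (τ : ℕ → ℝ)
    (hrec : ∀ i ≥ 2,
      φ (τ i - 1) < max (φ (tstar - 2)) (Real.sqrt (φ (tstar - 2) * φ (τ (i - 1))))) :
    (∀ i ≥ 1, τ i ≤ max (τ 1) tstar) ∧
    (∀ n : ℕ, ∑ j ∈ Finset.Icc 1 n, max (τ j - tstar) 0 ≤ 2 * max (τ 1 - tstar) 0) := by
  have hstep : ∀ i ≥ 1, τ (i + 1) < max (tstar - 1) ((tstar + τ i) / 2) := fun i hi =>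
    lt_max_sub_one_midpoint_of_logConcave hφmono hφlc (by simpa using hrec (i + 1) (by omega))
  refine ⟨le_max_head_of_succ_le_max fun i hi => le_max_of_lt_max_midpoint (hstep i hi), ?_⟩
  exact sum_Icc_le_two_mul_of_halving (fun _ => le_max_right _ _)
    fun i hi => max_sub_zero_le_half_of_lt_max_midpoint (hstep i hi)

/-- Bounding restart epoch lengths (Lemma `bound-large-t`). -/
theorem stmt6 (tstar : ℝ) (htstar : 2 ≤ tstar)
    (φ : ℝ → ℝ) (hφmono : StrictMono φ)
    (hφlc : ∀ a b : ℝ, Real.sqrt (φ a * φ b) ≤ φ ((a + b) / 2))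
    (τ : ℕ → ℝ) (hτpos : ∀ i, 0 < τ i)
    (hrec : ∀ i ≥ 2,
      φ (τ i - 1) < max (φ (tstar - 2)) (Real.sqrt (φ (tstar - 2) * φ (τ (i - 1))))) :
    (∀ i ≥ 1, τ i ≤ max (τ 1) tstar) ∧
    (∀ n : ℕ, ∑ j ∈ Finset.Icc 1 n, max (τ j - tstar) 0 ≤ 2 * max (τ 1 - tstar) 0) :=
  stmt6_general tstar φ hφmono hφlc τ hrec
end
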